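/- For every finite nonempty set A of real numbers, the number of triples (d,d',d'') ∈ (A−A)³ with d'' = d − d' is at least |A|⁶ / E₃(A). -/

import Mathlib

/-!
The map `(a, b, c) ↦ ((a - b, c - b), a - c)` sends `A³` into the set `T` of triples
`(d, d', d - d')` of differences. Cauchy–Schwarz over its fibres gives
`|A|⁶ ≤ |T| · #{colliding pairs of triples}`, and two triples collide exactly when one is a
translate `(a - x, b - x, c - x)` of the other, so the colliding pairs with shift `x` are
`r_{A−A}(x)³` in number and all of them together are `E₃(A)`.
-/

open Finset Pointwise

/-- `rD A x` is the number of pairs `(a,b) ∈ A × A` with `a - b = x`. -/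
noncomputable def rD (A : Finset ℝ) (x : ℝ) : ℕ :=
  ((A ×ˢ A).filter (fun q => q.1 - q.2 = x)).card

/-- The cubic energy `E₃(A) = Σ_x r_{A−A}(x)³` (only `x ∈ A - A` contribute). -/
noncomputable def E3c (A : Finset ℝ) : ℕ :=
  ∑ x ∈ A - A, rD A x ^ 3

section Collisions

variable {ι κ : Type*} [DecidableEq κ] {s : Finset ι} {t : Finset κ} {f : ι → κ}

lemma sum_card_fiber_sq_eq_card_collisions (hf : ∀ i ∈ s, f i ∈ t) :
    ∑ y ∈ t, #{i ∈ s | f i = y} ^ 2 = #{p ∈ s ×ˢ s | f p.1 = f p.2} := by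
  calc ∑ y ∈ t, #{i ∈ s | f i = y} ^ 2
      = ∑ y ∈ t, #{p ∈ {p ∈ s ×ˢ s | f p.1 = f p.2} | f p.1 = y} := by
        refine sum_congr rfl fun y _ => ?_
        rw [sq, ← card_product, ← filter_product, filter_filter]
        congr 1
        ext p
        simp only [mem_filter]
        grind
    _ = #{p ∈ {p ∈ s ×ˢ s | f p.1 = f p.2} | f p.1 ∈ t} := sum_card_fiberwise_eq_card_filter ..
    _ = #{p ∈ s ×ˢ s | f p.1 = f p.2} := by
        rw [filter_true_of_mem fun p hp => hf _ (mem_product.1 (mem_filter.1 hp).1).1]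

lemma card_sq_le_card_mul_card_collisions (hf : ∀ i ∈ s, f i ∈ t) :
    #s ^ 2 ≤ #t * #{p ∈ s ×ˢ s | f p.1 = f p.2} := by
  rw [card_eq_sum_card_fiberwise hf, ← sum_card_fiber_sq_eq_card_collisions hf]
  exact sq_sum_le_card_mul_sum_sq

end Collisions

section DiffTriple

variable {α : Type*} [AddCommGroup α]

def diffTriple (p : α × α × α) : (α × α) × α :=
  ((p.1 - p.2.1, p.2.2 - p.2.1), p.1 - p.2.2)

lemma diffTriple_mem [DecidableEq α] {A : Finset α} {p : α × α × α} (hp : p ∈ A ×ˢ A ×ˢ A) :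
    diffTriple p ∈ {t ∈ ((A - A) ×ˢ (A - A)) ×ˢ (A - A) | t.2 = t.1.1 - t.1.2} := by
  obtain ⟨ha, hb, hc⟩ := by simpa only [mem_product] using hp
  simp only [diffTriple, mem_filter, mem_product]
  exact ⟨⟨⟨sub_mem_sub ha hb, sub_mem_sub hc hb⟩, sub_mem_sub ha hc⟩, by abel⟩

lemma diffTriple_eq_diffTriple_iff {p q : α × α × α} :
    diffTriple p = diffTriple q ↔
      p.1 - q.1 = p.2.1 - q.2.1 ∧ p.2.2 - q.2.2 = p.2.1 - q.2.1 := by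
  simp only [diffTriple, Prod.mk.injEq]
  constructor
  · rintro ⟨⟨hab, hcb⟩, -⟩
    exact ⟨sub_eq_sub_iff_sub_eq_sub.1 hab, sub_eq_sub_iff_sub_eq_sub.1 hcb⟩
  · rintro ⟨hab, hcb⟩
    exact ⟨⟨sub_eq_sub_iff_sub_eq_sub.2 hab, sub_eq_sub_iff_sub_eq_sub.2 hcb⟩,
      sub_eq_sub_iff_sub_eq_sub.2 (hab.trans hcb.symm)⟩

end DiffTriple

lemma card_diffTriple_collisions_of_shift (A : Finset ℝ) (x : ℝ) :
    #{pq ∈ (A ×ˢ A ×ˢ A) ×ˢ (A ×ˢ A ×ˢ A) |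
        diffTriple pq.1 = diffTriple pq.2 ∧ pq.1.2.1 - pq.2.2.1 = x} = rD A x ^ 3 := by
  rw [rD, pow_succ, sq, ← card_product, ← card_product]
  refine card_nbij' (fun pq => (((pq.1.1, pq.2.1), (pq.1.2.1, pq.2.2.1)), (pq.1.2.2, pq.2.2.2)))
    (fun u => ((u.1.1.1, u.1.2.1, u.2.1), (u.1.1.2, u.1.2.2, u.2.2))) ?_ ?_ (fun _ _ => rfl)
    (fun _ _ => rfl)
  · intro pq hpq
    simp only [coe_filter, mem_product, Set.mem_ofPred_eq, diffTriple_eq_diffTriple_iff] at hpq ⊢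
    grind
  · intro u hu
    simp only [coe_filter, mem_product, Set.mem_ofPred_eq, diffTriple_eq_diffTriple_iff] at hu ⊢
    grind

lemma card_diffTriple_collisions (A : Finset ℝ) :
    #{pq ∈ (A ×ˢ A ×ˢ A) ×ˢ (A ×ˢ A ×ˢ A) | diffTriple pq.1 = diffTriple pq.2} = E3c A := by
  have hshift : ∀ pq ∈ {pq ∈ (A ×ˢ A ×ˢ A) ×ˢ (A ×ˢ A ×ˢ A) |
      diffTriple pq.1 = diffTriple pq.2}, pq.1.2.1 - pq.2.2.1 ∈ A - A := by
    intro pq hpq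
    simp only [mem_filter, mem_product] at hpq
    exact sub_mem_sub hpq.1.1.2.1 hpq.1.2.2.1
  rw [card_eq_sum_card_fiberwise hshift, E3c]
  refine sum_congr rfl fun x _ => ?_
  rw [filter_filter, card_diffTriple_collisions_of_shift]

theorem triple_differences_vs_E3_general (A : Finset ℝ) :
    (A.card : ℝ) ^ 6 / (E3c A : ℝ) ≤
      (((((A - A) ×ˢ (A - A)) ×ˢ (A - A)).filter
          (fun t => t.2 = t.1.1 - t.1.2)).card : ℝ) := by
  have key : #A ^ 6 ≤ #{t ∈ ((A - A) ×ˢ (A - A)) ×ˢ (A - A) | t.2 = t.1.1 - t.1.2} * E3c A :=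
    calc #A ^ 6 = #(A ×ˢ A ×ˢ A) ^ 2 := by rw [card_product, card_product]; ring
      _ ≤ _ := card_sq_le_card_mul_card_collisions fun _ => diffTriple_mem
      _ = _ := by rw [card_diffTriple_collisions]
  exact div_le_of_le_mul₀ (by positivity) (by positivity) (by exact_mod_cast key)

theorem triple_differences_vs_E3 (A : Finset ℝ) (hA : A.Nonempty) :
    (A.card : ℝ) ^ 6 / (E3c A : ℝ) ≤
      (((((A - A) ×ˢ (A - A)) ×ˢ (A - A)).filter
          (fun t => t.2 = t.1.1 - t.1.2)).card : ℝ) :=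
  triple_differences_vs_E3_general A
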